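/- arXiv:2401.15178 — 4 statements merged into one kernel-verified Lean document; each statement's English description precedes it below -/
import Mathlib

section
/- If f(x) = ∫₀^∞ e^{-xt} dσ(t) for a positive Borel measure σ on [0,∞), then the L²(0,1) norm of f satisfies ‖f‖_{L²(0,1)} ≥ ∫₀^∞ dσ(t)/(t+1). -/
open MeasureTheory Set

/-!
By Fubini, `∫₀¹ f = ∫ (∫₀¹ e^{-xt} dx) dσ(t) = ∫ (1 - e^{-t}) / t dσ(t) ≥ ∫ dσ(t) / (t + 1)`,
and on the probability space `(0, 1)` the integral of `f` is at most its `L²` norm. Fubini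
applies because `σ` is σ-finite, the integrable function `1 / (t + 1)` being nonzero `σ`-a.e.
-/

theorem sigmaFinite_of_integrable_of_ae_ne_zero {α E : Type*} [MeasurableSpace α]
    [NormedAddCommGroup E] {μ : Measure α} {g : α → E} (hg : Integrable g μ)
    (hg0 : ∀ᵐ x ∂μ, g x ≠ 0) : SigmaFinite μ := by
  refine ⟨⟨⟨fun n : ℕ => {x | 1 / ((n : ℝ) + 1) ≤ ‖g x‖} ∪ {x | g x = 0},
    fun _ => trivial, fun n => ?_, ?_⟩⟩⟩
  · refine (measure_union_le _ _).trans_lt (ENNReal.add_lt_top.2 ⟨?_, ?_⟩)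
    · exact hg.measure_norm_ge_lt_top (by positivity)
    · have h0 : μ {x | g x = 0} = 0 := by simpa [ae_iff] using hg0
      simp [h0]
  · refine eq_univ_of_forall fun x => ?_
    rcases eq_or_ne (g x) 0 with h | h
    · exact mem_iUnion.2 ⟨0, Or.inr h⟩
    · obtain ⟨n, hn⟩ := exists_nat_one_div_lt (norm_pos_iff.2 h)
      exact mem_iUnion.2 ⟨n, Or.inl hn.le⟩

theorem integral_le_toReal_eLpNorm {α : Type*} [MeasurableSpace α] {μ : Measure α}
    [IsProbabilityMeasure μ] {f : α → ℝ} {p : ENNReal} (hp : 1 ≤ p) (hf : MemLp f p μ) :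
    ∫ x, f x ∂μ ≤ (eLpNorm f p μ).toReal := by
  have hL1 : ‖∫ x, f x ∂μ‖ₑ ≤ eLpNorm f p μ := by
    calc ‖∫ x, f x ∂μ‖ₑ ≤ ∫⁻ x, ‖f x‖ₑ ∂μ := enorm_integral_le_lintegral_enorm f
      _ = eLpNorm f 1 μ := eLpNorm_one_eq_lintegral_enorm.symm
      _ ≤ eLpNorm f p μ := eLpNorm_le_eLpNorm_of_exponent_le hp hf.aestronglyMeasurable
  calc ∫ x, f x ∂μ ≤ ‖∫ x, f x ∂μ‖ := Real.le_norm_self _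
    _ = ‖∫ x, f x ∂μ‖ₑ.toReal := (toReal_enorm _).symm
    _ ≤ (eLpNorm f p μ).toReal := ENNReal.toReal_mono hf.2.ne hL1

theorem integral_exp_neg_mul_Ioo_zero_one {t : ℝ} (ht : t ≠ 0) :
    ∫ x in Ioo (0:ℝ) 1, Real.exp (-x * t) = (1 - Real.exp (-t)) / t := by
  rw [← integral_Ioc_eq_integral_Ioo, ← intervalIntegral.integral_of_le zero_le_one]
  simp_rw [show ∀ x : ℝ, -x * t = -t * x from fun x => by ring]
  rw [intervalIntegral.integral_comp_mul_left (f := Real.exp) (neg_ne_zero.2 ht), integral_exp]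
  simp only [smul_eq_mul, mul_one, mul_zero, Real.exp_zero]
  field_simp
  ring

theorem one_div_add_one_le_integral_exp_neg_mul {t : ℝ} (ht : 0 ≤ t) :
    1 / (t + 1) ≤ ∫ x in Ioo (0:ℝ) 1, Real.exp (-x * t) := by
  rcases ht.eq_or_lt with rfl | ht
  · simp
  rw [integral_exp_neg_mul_Ioo_zero_one ht.ne', div_le_div_iff₀ (by linarith) ht]
  -- `(1 - e^{-t})(t + 1) ≥ t` is `e^t ≥ t + 1` multiplied by `e^{-t}`
  have h := mul_le_mul_of_nonneg_left (Real.add_one_le_exp t) (Real.exp_pos (-t)).le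
  rw [← Real.exp_add, neg_add_cancel, Real.exp_zero] at h
  nlinarith

theorem integrable_exp_neg_mul_prod {μ σ : Measure ℝ} [SFinite σ]
    (hint : ∀ᵐ x ∂μ, Integrable (fun t => Real.exp (-x * t)) σ)
    (hL : Integrable (fun x => ∫ t, Real.exp (-x * t) ∂σ) μ) :
    Integrable (fun p : ℝ × ℝ => Real.exp (-p.1 * p.2)) (μ.prod σ) := by
  refine (integrable_prod_iff (by fun_prop)).2 ⟨hint, hL.congr (ae_of_all _ fun x => ?_)⟩
  simp only [Real.norm_eq_abs, Real.abs_exp]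

/-- If `f(x) = ∫₀^∞ e^{-xt} dσ(t)` for a positive Borel measure `σ` on `[0,∞)`,
then `‖f‖_{L²(0,1)} ≥ ∫₀^∞ dσ(t)/(t+1)`. -/
theorem stmt2 (σ : Measure ℝ) (hσ0 : σ (Set.Iio 0) = 0)
    (f : ℝ → ℝ)
    (hint : ∀ x : ℝ, 0 < x → Integrable (fun t => Real.exp (-x * t)) σ)
    (hf : ∀ x : ℝ, 0 < x → f x = ∫ t, Real.exp (-x * t) ∂σ)
    (hstar : Integrable (fun t => 1 / (t + 1)) σ)
    (hfL2 : MemLp f 2 (volume.restrict (Set.Ioo 0 1))) :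
    (eLpNorm f 2 (volume.restrict (Set.Ioo 0 1))).toReal ≥ ∫ t, 1 / (t + 1) ∂σ := by
  have hσ_nonneg : ∀ᵐ t ∂σ, 0 ≤ t := by simpa [ae_iff, Iio] using hσ0
  have : SigmaFinite σ := sigmaFinite_of_integrable_of_ae_ne_zero hstar <| by
    filter_upwards [hσ_nonneg] with t ht using by positivity
  set μ := volume.restrict (Ioo (0:ℝ) 1)
  have : IsProbabilityMeasure μ := ⟨by simp [μ]⟩
  have hμ_mem : ∀ᵐ x ∂μ, x ∈ Ioo 0 1 := ae_restrict_mem measurableSet_Ioo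
  have hf_ae : f =ᵐ[μ] fun x => ∫ t, Real.exp (-x * t) ∂σ := by
    filter_upwards [hμ_mem] with x hx using hf x hx.1
  have hprod := integrable_exp_neg_mul_prod (hμ_mem.mono fun x hx => hint x hx.1)
    ((hfL2.integrable one_le_two).congr hf_ae)
  rw [ge_iff_le]
  calc ∫ t, 1 / (t + 1) ∂σ ≤ ∫ t, ∫ x, Real.exp (-x * t) ∂μ ∂σ :=
        integral_mono_ae hstar hprod.integral_prod_right
          (hσ_nonneg.mono fun t ht => one_div_add_one_le_integral_exp_neg_mul ht)
    _ = ∫ x, ∫ t, Real.exp (-x * t) ∂σ ∂μ := (integral_integral_swap hprod).symm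
    _ = ∫ x, f x ∂μ := integral_congr_ae hf_ae.symm
    _ ≤ (eLpNorm f 2 μ).toReal := integral_le_toReal_eLpNorm one_le_two hfL2
end

section
/- Let α(z) = arccos(1/z) = i·log((1 − i√(z²−1))/z) with principal branches. For every z in Ω = {z ∈ ℂ : Re z > 0, z ∉ [0,1]}, the real part of α(z) lies strictly in (0, π/2). -/
/-!
With `s = √(z² - 1)` (principal branch, so `Re s > 0` because `z² - 1` avoids `(-∞, 0]` on `Ω`)
and `w = (1 - i s) / z`, we have `Re (i log w) = -arg w`, so it suffices that `w` lies in the open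
fourth quadrant. Since `s² = z² - 1`, `w⁻¹ = (1 + i s) / z`, hence `w + w⁻¹ = 2 / z` and
`w - w⁻¹ = -2 i s / z`. The real part of `w + w⁻¹` has the sign of `Re w`, and the imaginary part
of `w - w⁻¹` that of `Im w`; so `Re w > 0` follows from `Re z > 0`, and `Im w < 0` from
`Re (s / z) > 0`, which holds because `Re s Im s = Re z Im z` forces `Im s Im z ≥ 0`.
-/

open Real

namespace Complex

lemma re_I_mul_log (w : ℂ) : (I * log w).re = -arg w := by
  simp [log_im]

lemma re_pos_of_re_add_inv_pos {w : ℂ} (h : 0 < (w + w⁻¹).re) : 0 < w.re := by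
  by_contra! hw
  have : w.re / normSq w ≤ 0 := div_nonpos_of_nonpos_of_nonneg hw (normSq_nonneg w)
  rw [add_re, inv_re] at h
  linarith

lemma im_neg_of_im_sub_inv_neg {w : ℂ} (h : (w - w⁻¹).im < 0) : w.im < 0 := by
  by_contra! hw
  have : 0 ≤ w.im / normSq w := div_nonneg hw (normSq_nonneg w)
  rw [sub_im, inv_im, neg_div] at h
  linarith

lemma re_cpow_inv_two_pos {a : ℂ} (ha : a ∈ slitPlane) : 0 < (a ^ (2⁻¹ : ℂ)).re := by
  rw [cpow_inv_two_re, Real.sqrt_pos]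
  rcases mem_slitPlane_iff.1 ha with h | h
  · linarith [norm_nonneg a]
  · linarith [(abs_lt.1 (abs_re_lt_norm.2 h)).1]

lemma sq_sub_one_mem_slitPlane {z : ℂ} (hz : 0 < z.re) (hz2 : ¬ (z.im = 0 ∧ z.re ≤ 1)) :
    z ^ 2 - 1 ∈ slitPlane := by
  rw [mem_slitPlane_iff]
  by_cases him : z.im = 0
  · have : 1 < z.re := lt_of_not_ge fun h => hz2 ⟨him, h⟩
    left
    simp only [sq, sub_re, mul_re, him, one_re]
    nlinarith
  · right
    simp only [sq, sub_im, mul_im, one_im]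
    intro h
    exact him (by nlinarith [mul_pos hz hz])

lemma re_div_pos_of_im_sq_eq {s z : ℂ} (hs : 0 < s.re) (hz : 0 < z.re)
    (h : (s ^ 2).im = (z ^ 2).im) : 0 < (s / z).re := by
  have hsz : s.re * s.im = z.re * z.im := by
    simp only [sq, mul_im] at h
    linarith
  have him : 0 ≤ s.im * z.im := by
    by_contra! hneg
    have hprod : (s.re * z.re) * (s.im * z.im) = (z.re * z.im) ^ 2 := by
      linear_combination (z.re * z.im) * hsz
    linarith [mul_neg_of_pos_of_neg (mul_pos hs hz) hneg, sq_nonneg (z.re * z.im)]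
  have hnormSq : 0 < normSq z := normSq_pos.2 fun h0 => by simp [h0] at hz
  rw [div_re]
  exact add_pos_of_pos_of_nonneg (div_pos (mul_pos hs hz) hnormSq) (div_nonneg him hnormSq.le)

section Joukowski

variable {s z : ℂ}

lemma inv_one_sub_I_mul_div (hz : z ≠ 0) (hs : s ^ 2 = z ^ 2 - 1) :
    ((1 - I * s) / z)⁻¹ = (1 + I * s) / z := by
  refine inv_eq_of_mul_eq_one_right ?_
  rw [div_mul_div_comm, div_eq_one_iff_eq (mul_ne_zero hz hz)]
  linear_combination hs - s ^ 2 * I_sq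

lemma re_one_sub_I_mul_div_pos (hz : 0 < z.re) (hs : s ^ 2 = z ^ 2 - 1) :
    0 < ((1 - I * s) / z).re := by
  have hz0 : z ≠ 0 := fun h => by simp [h] at hz
  apply re_pos_of_re_add_inv_pos
  have hsum : (1 - I * s) / z + (1 + I * s) / z = 2 * z⁻¹ := by field_simp; ring
  rw [inv_one_sub_I_mul_div hz0 hs, hsum]
  simp only [mul_re, re_ofNat, im_ofNat, zero_mul, sub_zero, inv_re]
  have : 0 < normSq z := normSq_pos.2 hz0
  positivity

lemma im_one_sub_I_mul_div_neg (hz : 0 < z.re) (hs_re : 0 < s.re) (hs : s ^ 2 = z ^ 2 - 1) :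
    ((1 - I * s) / z).im < 0 := by
  have hz0 : z ≠ 0 := fun h => by simp [h] at hz
  apply im_neg_of_im_sub_inv_neg
  have hdiff : (1 - I * s) / z - (1 + I * s) / z = -2 * I * (s / z) := by field_simp; ring
  have hsz : 0 < (s / z).re := re_div_pos_of_im_sq_eq hs_re hz (by simp [hs])
  rw [inv_one_sub_I_mul_div hz0 hs, hdiff]
  simp only [mul_im, mul_re, neg_re, neg_im, I_re, I_im, re_ofNat, im_ofNat]
  linarith

end Joukowski

end Complex

/-- For `α(z) = arccos(1/z) = i log((1 − i√(z²−1))/z)` (principal branches), the real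
part of `α(z)` lies strictly in `(0, π/2)` for every `z` in the right half-plane
with the segment `[0,1]` removed. -/
theorem stmt12 (z : ℂ) (hz : 0 < z.re) (hz2 : ¬ (z.im = 0 ∧ z.re ≤ 1)) :
    0 < (Complex.I * Complex.log ((1 - Complex.I * (z ^ 2 - 1) ^ ((1 : ℂ) / 2)) / z)).re ∧
    (Complex.I * Complex.log ((1 - Complex.I * (z ^ 2 - 1) ^ ((1 : ℂ) / 2)) / z)).re < π / 2 := by
  rw [one_div]
  set s := (z ^ 2 - 1) ^ (2⁻¹ : ℂ)
  have hs : s ^ 2 = z ^ 2 - 1 := Complex.cpow_ofNat_inv_pow _ 2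
  have hs_re : 0 < s.re := Complex.re_cpow_inv_two_pos (Complex.sq_sub_one_mem_slitPlane hz hz2)
  have harg_lt : |Complex.arg ((1 - Complex.I * s) / z)| < π / 2 :=
    Complex.abs_arg_lt_pi_div_two_iff.2 (Or.inl (Complex.re_one_sub_I_mul_div_pos hz hs))
  have harg_neg : Complex.arg ((1 - Complex.I * s) / z) < 0 :=
    Complex.arg_neg_iff.2 (Complex.im_one_sub_I_mul_div_neg hz hs_re hs)
  rw [Complex.re_I_mul_log]
  constructor <;> linarith [abs_lt.1 harg_lt]
end

section
/- Let y > 0, p > 1, and z = (iy)^{1/p} (principal branch). Then Re α(z) ∈ (π/(2p), π/2), where α(z) = arccos(1/z) with principal branches. -/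
/-!
Write `z = (iy)^{1/p}`, so `arg z = π/(2p) ∈ (0, π/2)`, and `s = √(z² - 1)`, which lies in the open
first quadrant because `z² - 1` lies in the upper half-plane. From `s² = z² - 1` one gets
`Re(s z̄) · Im(s z̄) = Re z · Im z > 0`, i.e. `arg s > arg z`. This makes
`Re((1 - is) z̄) = Re z + Im(s z̄)` positive, so `ω = (1 - is)/z` has `arg ω > -π/2`, while
`arg ω + arg z = arg(1 - is) < 0`. Finally `Re(i log ω) = -arg ω`.
-/

open Complex Real

namespace Complex

lemma arg_cpow_ofReal {x : ℂ} (hx : x ≠ 0) {r : ℝ} (hr : arg x * r ∈ Set.Ioc (-π) π) :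
    arg (x ^ (r : ℂ)) = arg x * r := by
  rw [cpow_ofReal, ofReal_cos, ofReal_sin]
  exact arg_mul_cos_add_sin_mul_I (rpow_pos_of_pos (norm_pos_iff.2 hx) r) hr

lemma re_pos_and_im_pos_of_arg_mem_Ioo {z : ℂ} (hz : z ≠ 0) (h : arg z ∈ Set.Ioo 0 (π / 2)) :
    0 < z.re ∧ 0 < z.im := by
  have hnorm : 0 < ‖z‖ := norm_pos_iff.2 hz
  refine ⟨?_, ?_⟩
  · rw [← norm_mul_cos_arg]
    exact mul_pos hnorm (cos_pos_of_mem_Ioo ⟨by linarith [h.1, pi_pos], h.2⟩)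
  · rw [← norm_mul_sin_arg]
    exact mul_pos hnorm (sin_pos_of_pos_of_lt_pi h.1 (by linarith [h.2, pi_pos]))

lemma re_pos_and_im_pos_cpow_one_half {w : ℂ} (hw : 0 < w.im) :
    0 < (w ^ (1 / 2 : ℂ)).re ∧ 0 < (w ^ (1 / 2 : ℂ)).im := by
  have hw0 : w ≠ 0 := fun h ↦ by simp [h] at hw
  have harg : 0 < arg w := (arg_nonneg_iff.2 hw.le).lt_of_ne' fun h ↦ by
    simp [(arg_eq_zero_iff.1 h).2] at hw
  have hcast : (1 / 2 : ℂ) = ((1 / 2 : ℝ) : ℂ) := by push_cast; rfl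
  rw [hcast]
  have hroot : arg (w ^ ((1 / 2 : ℝ) : ℂ)) = arg w * (1 / 2) :=
    arg_cpow_ofReal hw0 ⟨by linarith [pi_pos], by linarith [arg_le_pi w, pi_pos]⟩
  refine re_pos_and_im_pos_of_arg_mem_Ioo (cpow_ne_zero_iff_of_exponent_ne_zero ?_ |>.2 hw0) ?_
  · norm_num
  · rw [hroot]
    constructor <;> linarith [arg_lt_pi_iff.2 (Or.inr hw.ne')]

/-- The conclusion says `arg z < arg s`. -/
lemma im_mul_re_lt_re_mul_im_of_sq_eq_sq_sub_one {z s : ℂ} (hzre : 0 < z.re) (hzim : 0 < z.im)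
    (hsre : 0 ≤ s.re) (hsim : 0 ≤ s.im) (hsz : s ^ 2 = z ^ 2 - 1) :
    z.im * s.re < z.re * s.im := by
  obtain ⟨hre, him⟩ := Complex.ext_iff.1 hsz
  simp only [sq, mul_re, mul_im, sub_re, sub_im, one_re, one_im] at hre him
  -- `u = s z̄` satisfies `u² = |z|⁴ - z̄²`, hence `Re u · Im u = Re z · Im z`.
  have hu : (s.re * z.re + s.im * z.im) * (s.im * z.re - s.re * z.im) = z.re * z.im := by
    linear_combination (z.re ^ 2 - z.im ^ 2) / 2 * him - (z.re * z.im) * hre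
  have hre_u : 0 ≤ s.re * z.re + s.im * z.im := by positivity
  nlinarith [pos_of_mul_pos_right (hu ▸ mul_pos hzre hzim) hre_u]

lemma arg_one_sub_I_mul_div_mem_Ioo {z s : ℂ} (hzre : 0 < z.re) (hsre : 0 < s.re)
    (hzs : z.im * s.re < z.re * s.im) :
    arg ((1 - I * s) / z) ∈ Set.Ioo (-(π / 2)) (-arg z) := by
  have hz0 : z ≠ 0 := fun h ↦ by simp [h] at hzre
  have hnum : (1 - I * s).im < 0 := by simpa using hsre
  have hnum0 : 1 - I * s ≠ 0 := fun h ↦ by simp [h] at hnum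
  have hωre : 0 < ((1 - I * s) / z).re := by
    rw [div_re, ← add_div]
    refine div_pos ?_ (normSq_pos.2 hz0)
    simp only [sub_re, one_re, mul_re, I_re, I_im, sub_im, one_im, mul_im]
    nlinarith
  have hω := abs_lt.1 (abs_arg_lt_pi_div_two_iff.2 (Or.inl hωre))
  have hz := abs_lt.1 (abs_arg_lt_pi_div_two_iff.2 (Or.inl hzre))
  have hsum : arg ((1 - I * s) / z) + arg z = arg (1 - I * s) := by
    rw [← arg_mul (div_ne_zero hnum0 hz0) hz0 ⟨by linarith, by linarith [pi_pos]⟩,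
      div_mul_cancel₀ _ hz0]
  exact ⟨hω.1, by linarith [arg_neg_iff.2 hnum]⟩

end Complex

/-- For `y > 0`, `p > 1` and `z = (iy)^{1/p}` (principal branch),
`Re α(z) ∈ (π/(2p), π/2)`, where `α(z) = arccos(1/z)` with principal branches,
i.e. `α(z) = i log((1 − i√(z²−1))/z)`. -/
theorem stmt13 (y p : ℝ) (hy : 0 < y) (hp : 1 < p) :
    π / (2 * p) <
      (Complex.I * Complex.log
        ((1 - Complex.I *
            (((Complex.I * y) ^ ((1 / p : ℝ) : ℂ)) ^ 2 - 1) ^ ((1 : ℂ) / 2)) /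
          ((Complex.I * y) ^ ((1 / p : ℝ) : ℂ)))).re ∧
    (Complex.I * Complex.log
        ((1 - Complex.I *
            (((Complex.I * y) ^ ((1 / p : ℝ) : ℂ)) ^ 2 - 1) ^ ((1 : ℂ) / 2)) /
          ((Complex.I * y) ^ ((1 / p : ℝ) : ℂ)))).re < π / 2 := by
  have hp0 : 0 < p := by linarith
  have hθ : π / (2 * p) ∈ Set.Ioo 0 (π / 2) :=
    ⟨by positivity, div_lt_div_of_pos_left pi_pos two_pos (by linarith)⟩
  have hIy : I * y ≠ 0 := mul_ne_zero I_ne_zero (ofReal_ne_zero.2 hy.ne')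
  set z := (I * y) ^ ((1 / p : ℝ) : ℂ)
  have hz0 : z ≠ 0 := (cpow_ne_zero_iff_of_exponent_ne_zero (by simp [hp0.ne'])).2 hIy
  have hargz : arg z = π / (2 * p) := by
    have h : arg (I * y) * (1 / p) = π / (2 * p) := by rw [arg_mul_real hy, arg_I]; field_simp
    rw [arg_cpow_ofReal hIy (h ▸ ⟨by linarith [hθ.1, pi_pos], by linarith [hθ.2, pi_pos]⟩), h]
  obtain ⟨hzre, hzim⟩ := re_pos_and_im_pos_of_arg_mem_Ioo hz0 (hargz ▸ hθ)
  set s := (z ^ 2 - 1) ^ ((1 : ℂ) / 2)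
  have hw : 0 < (z ^ 2 - 1).im := by
    simp only [sq, sub_im, mul_im, one_im, sub_zero]
    positivity
  obtain ⟨hsre, hsim⟩ := re_pos_and_im_pos_cpow_one_half hw
  have hsz : s ^ 2 = z ^ 2 - 1 := by
    simpa only [s, one_div] using cpow_ofNat_inv_pow (z ^ 2 - 1) 2
  have hω := arg_one_sub_I_mul_div_mem_Ioo hzre hsre
    (im_mul_re_lt_re_mul_im_of_sq_eq_sq_sub_one hzre hzim hsre.le hsim.le hsz)
  have hre_log : ∀ w : ℂ, (I * log w).re = -arg w := fun w ↦ by simp [log_im]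
  rw [hre_log, ← hargz]
  exact ⟨by linarith [hω.2], by linarith [hω.1]⟩
end

section
/- The set of finite positive linear combinations of exponentials x ↦ e^{-xt}, t ≥ 0, is dense (in the L²(0,1) norm) in the cone 𝔠₂ of completely monotone functions with finite L²(0,1) norm. -/
open MeasureTheory Set Filter
open scoped ENNReal Topology

/-! Since `e^{-t}` is `σ`-integrable, `σ` is finite on bounded sets. Truncating `σ` to `[0, N)`
gives Laplace transforms `F_N` with `0 ≤ F_N ≤ f` on `(0, 1)` and `F_N → f` pointwise, so
`‖f - F_N‖₂ → 0` by dominated convergence. For fixed `N`, cut `[0, N)` into pieces of width `w`: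
as `t ↦ e^{-xt}` is `1`-Lipschitz on `t ≥ 0` for `x ∈ [0, 1]`, the Riemann sum
`∑ⱼ σ[jw, (j+1)w) e^{-x jw}` is uniformly within `w σ[0, N)` of `F_N`, and on `(0, 1)` a uniform
bound is an `L²` bound. -/

theorem abs_exp_neg_mul_sub_exp_neg_mul_le {x s t : ℝ} (hx₀ : 0 ≤ x) (hx₁ : x ≤ 1) (hs : 0 ≤ s)
    (hst : s ≤ t) : |Real.exp (-x * t) - Real.exp (-x * s)| ≤ t - s := by
  have hle : Real.exp (-x * t) ≤ Real.exp (-x * s) := Real.exp_le_exp.2 (by nlinarith)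
  rw [abs_sub_comm, abs_of_nonneg (sub_nonneg.2 hle)]
  have hsplit : Real.exp (-x * t) = Real.exp (-x * s) * Real.exp (-(x * (t - s))) := by
    rw [← Real.exp_add]; ring_nf
  have hlin := Real.add_one_le_exp (-(x * (t - s)))
  have hs1 : Real.exp (-x * s) ≤ 1 := Real.exp_le_one_iff.2 (by nlinarith)
  nlinarith [Real.exp_pos (-x * s), mul_nonneg hx₀ (sub_nonneg.2 hst)]

theorem measure_lt_top_of_bddAbove_of_integrable_exp_neg {σ : Measure ℝ}
    (h : Integrable (fun t => Real.exp (-t)) σ) {s : Set ℝ} (hs : BddAbove s) : σ s < ∞ := by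
  obtain ⟨b, hb⟩ := hs
  have hε : ENNReal.ofReal (Real.exp (-b)) ≠ 0 := by simp [Real.exp_pos]
  calc σ s
      ≤ σ {t | ENNReal.ofReal (Real.exp (-b)) ≤ ENNReal.ofReal (Real.exp (-t))} :=
        measure_mono fun t ht => ENNReal.ofReal_le_ofReal (Real.exp_le_exp.2 (neg_le_neg (hb ht)))
    _ ≤ (∫⁻ t, ENNReal.ofReal (Real.exp (-t)) ∂σ) / ENNReal.ofReal (Real.exp (-b)) :=
        meas_ge_le_lintegral_div (by fun_prop) hε ENNReal.ofReal_ne_top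
    _ < ∞ := ENNReal.div_lt_top h.lintegral_lt_top.ne hε

theorem tendsto_eLpNorm_of_dominated {α E : Type*} [MeasurableSpace α] {μ : Measure α}
    [NormedAddCommGroup E] {p : ℝ≥0∞} (hp₀ : p ≠ 0) (hp : p ≠ ∞) {F : ℕ → α → E}
    {bound : α → ℝ} (hF : ∀ n, AEStronglyMeasurable (F n) μ) (hbound : MemLp bound p μ)
    (h_le : ∀ n, ∀ᵐ x ∂μ, ‖F n x‖ ≤ bound x)
    (h_lim : ∀ᵐ x ∂μ, Tendsto (fun n => F n x) atTop (𝓝 0)) :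
    Tendsto (fun n => eLpNorm (F n) p μ) atTop (𝓝 0) := by
  have hp_pos : 0 < p.toReal := ENNReal.toReal_pos hp₀ hp
  have hlint : Tendsto (fun n => ∫⁻ x, ‖F n x‖ₑ ^ p.toReal ∂μ) atTop (𝓝 0) := by
    have := tendsto_lintegral_of_dominated_convergence'
      (F := fun n x => ‖F n x‖ₑ ^ p.toReal) (fun x => ‖bound x‖ₑ ^ p.toReal)
      (fun n => (hF n).enorm.pow_const _)
      (fun n => (h_le n).mono fun x hx =>
        ENNReal.rpow_le_rpow (enorm_le_iff_norm_le.2 (hx.trans (le_abs_self _))) hp_pos.le)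
      (lintegral_rpow_enorm_lt_top_of_eLpNorm_lt_top hp₀ hp hbound.2).ne
      (h_lim.mono fun x hx => by
        simpa [Function.comp_def, ENNReal.zero_rpow_of_pos hp_pos] using
          (ENNReal.continuous_rpow_const.tendsto _).comp ((continuous_enorm.tendsto _).comp hx))
    simpa [ENNReal.zero_rpow_of_pos hp_pos] using this
  simp_rw [eLpNorm_eq_lintegral_rpow_enorm_toReal hp₀ hp]
  simpa [Function.comp_def, hp_pos] using
    (ENNReal.continuous_rpow_const (y := 1 / p.toReal)).tendsto _ |>.comp hlint

section RiemannSum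

variable {ν : Measure ℝ} {g : ℝ → ℝ} {ε : ℝ}

theorem abs_setIntegral_sub_measureReal_mul_le {s : Set ℝ} {c : ℝ} (hs : ν s < ∞)
    (hg : IntegrableOn g s ν) (h : ∀ t ∈ s, |g t - c| ≤ ε) :
    |∫ t in s, g t ∂ν - ν.real s * c| ≤ ε * ν.real s := by
  have hsub : ∫ t in s, (g t - c) ∂ν = ∫ t in s, g t ∂ν - ν.real s * c := by
    rw [integral_sub hg (integrableOn_const hs.ne), setIntegral_const, smul_eq_mul]
  rw [← hsub]
  exact norm_setIntegral_le_of_norm_le_const (f := fun t => g t - c) hs h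

theorem abs_setIntegral_Ico_sub_sum_le {a : ℕ → ℝ} (ha : Monotone a) {k : ℕ}
    (hν : ν (Ico (a 0) (a k)) < ∞) (hg : IntegrableOn g (Ico (a 0) (a k)) ν)
    (hε : ∀ j < k, ∀ t ∈ Ico (a j) (a (j + 1)), |g t - g (a j)| ≤ ε) :
    |∫ t in Ico (a 0) (a k), g t ∂ν
        - ∑ j ∈ Finset.range k, ν.real (Ico (a j) (a (j + 1))) * g (a j)|
      ≤ ε * ν.real (Ico (a 0) (a k)) := by
  induction k with
  | zero => simp
  | succ k ih =>
    have hunion : Ico (a 0) (a (k + 1)) = Ico (a 0) (a k) ∪ Ico (a k) (a (k + 1)) :=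
      (Ico_union_Ico_eq_Ico (ha k.zero_le) (ha k.le_succ)).symm
    rw [hunion] at hν hg ⊢
    have hν₁ := (measure_mono subset_union_left).trans_lt hν
    have hν₂ := (measure_mono subset_union_right).trans_lt hν
    have hfirst := ih hν₁ (hg.mono_set subset_union_left) fun j hj => hε j (by omega)
    have hlast := abs_setIntegral_sub_measureReal_mul_le hν₂ (hg.mono_set subset_union_right)
      (hε k k.lt_succ_self)
    rw [setIntegral_union Ico_disjoint_Ico_same measurableSet_Ico
        (hg.mono_set subset_union_left) (hg.mono_set subset_union_right),
      measureReal_union Ico_disjoint_Ico_same measurableSet_Ico hν₁.ne hν₂.ne,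
      Finset.sum_range_succ]
    calc _ = |(∫ t in Ico (a 0) (a k), g t ∂ν
            - ∑ j ∈ Finset.range k, ν.real (Ico (a j) (a (j + 1))) * g (a j))
          + (∫ t in Ico (a k) (a (k + 1)), g t ∂ν
            - ν.real (Ico (a k) (a (k + 1))) * g (a k))| := by
          congr 1; ring
      _ ≤ _ := (abs_add_le _ _).trans (by linarith)

theorem exists_sum_exp_neg_mul_near_setIntegral_Ico {b : ℝ} (hb : 0 ≤ b) (hν : ν (Ico 0 b) < ∞)
    (hε : 0 < ε) :
    ∃ (n : ℕ) (c t : Fin n → ℝ), (∀ i, 0 ≤ c i) ∧ (∀ i, 0 ≤ t i) ∧ ∀ x ∈ Icc (0 : ℝ) 1,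
      |∫ s in Ico 0 b, Real.exp (-x * s) ∂ν - ∑ i, c i * Real.exp (-x * t i)| ≤ ε := by
  obtain ⟨k, hk⟩ := exists_nat_gt (b * ν.real (Ico 0 b) / ε)
  have hk₀ : (0 : ℝ) < k := lt_of_le_of_lt (by positivity) hk
  set w := b / k with hw_def
  have hw : 0 ≤ w := by positivity
  set a : ℕ → ℝ := fun j => j * w
  have ha : Monotone a := fun i j hij => mul_le_mul_of_nonneg_right (by exact_mod_cast hij) hw
  have ha₀ : a 0 = 0 := by simp [a]
  have hak : a k = b := by simp only [a, w]; field_simp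
  refine ⟨k, fun i => ν.real (Ico (a i) (a (i + 1))), fun i => a i, fun i => measureReal_nonneg,
    fun i => by positivity, fun x hx => ?_⟩
  have hint : IntegrableOn (fun s => Real.exp (-x * s)) (Ico (a 0) (a k)) ν := by
    rw [ha₀, hak]
    refine Measure.integrableOn_of_bounded (M := 1) hν.ne (by fun_prop) ?_
    filter_upwards [ae_restrict_mem measurableSet_Ico] with s hs
    rw [Real.norm_eq_abs, abs_of_pos (Real.exp_pos _), Real.exp_le_one_iff]
    nlinarith [hx.1, hs.1]
  have hstep : ∀ j < k, ∀ s ∈ Ico (a j) (a (j + 1)),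
      |Real.exp (-x * s) - Real.exp (-x * a j)| ≤ w := fun j _ s hs =>
    (abs_exp_neg_mul_sub_exp_neg_mul_le hx.1 hx.2 (by positivity) hs.1).trans
      (by simp only [a] at hs ⊢; push_cast at hs; linarith [hs.2])
  have hsum := abs_setIntegral_Ico_sub_sum_le ha (ha₀ ▸ hak ▸ hν) hint hstep
  rw [ha₀, hak] at hsum
  rw [Fin.sum_univ_eq_sum_range (fun j => ν.real (Ico (a j) (a (j + 1))) * Real.exp (-x * a j))]
  refine hsum.trans ?_
  rw [hw_def, div_mul_eq_mul_div, div_le_iff₀ hk₀]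
  rw [div_lt_iff₀ hε] at hk
  linarith

end RiemannSum

section Laplace

variable {σ : Measure ℝ}

theorem tendsto_setIntegral_Ico_natCast {E : Type*} [NormedAddCommGroup E] [NormedSpace ℝ E]
    (hσ : ∀ᵐ t ∂σ, 0 ≤ t) {g : ℝ → E} (hg : Integrable g σ) :
    Tendsto (fun n : ℕ => ∫ t in Ico 0 (n : ℝ), g t ∂σ) atTop (𝓝 (∫ t, g t ∂σ)) := by
  have hU : ⋃ n : ℕ, Ico (0 : ℝ) n = Ici 0 := by
    ext t
    simpa using fun _ => exists_nat_gt t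
  have hmono : Monotone fun n : ℕ => Ico (0 : ℝ) n := fun i j hij =>
    Ico_subset_Ico_right (by exact_mod_cast hij)
  have := tendsto_setIntegral_of_monotone (fun _ => measurableSet_Ico) hmono hg.integrableOn
  rwa [hU, Measure.restrict_eq_self_of_ae_mem (s := Ici 0) hσ] at this

theorem stronglyMeasurable_setIntegral_exp_neg_mul {s : Set ℝ} (hs : σ s < ∞) :
    StronglyMeasurable fun x => ∫ t in s, Real.exp (-x * t) ∂σ := by
  have : IsFiniteMeasure (σ.restrict s) := isFiniteMeasure_restrict.2 hs.ne
  exact (by fun_prop : Continuous fun p : ℝ × ℝ => Real.exp (-p.1 * p.2)).stronglyMeasurable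
    |>.integral_prod_right'

theorem tendsto_eLpNorm_sub_setIntegral_Ico_exp_neg_mul {μ : Measure ℝ} (hμ : ∀ᵐ x ∂μ, 0 < x)
    {p : ℝ≥0∞} (hp₀ : p ≠ 0) (hp : p ≠ ∞) (hσ : ∀ᵐ t ∂σ, 0 ≤ t)
    (hint : ∀ x : ℝ, 0 < x → Integrable (fun t => Real.exp (-x * t)) σ) {f : ℝ → ℝ}
    (hf : ∀ x : ℝ, 0 < x → f x = ∫ t, Real.exp (-x * t) ∂σ) (hfLp : MemLp f p μ) :
    Tendsto (fun n : ℕ => eLpNorm (fun x => f x - ∫ t in Ico 0 (n : ℝ), Real.exp (-x * t) ∂σ)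
      p μ) atTop (𝓝 0) := by
  have hfin : ∀ n : ℕ, σ (Ico 0 (n : ℝ)) < ∞ := fun n =>
    measure_lt_top_of_bddAbove_of_integrable_exp_neg (by simpa using hint 1 one_pos) bddAbove_Ico
  refine tendsto_eLpNorm_of_dominated hp₀ hp (fun n => hfLp.1.sub
    (stronglyMeasurable_setIntegral_exp_neg_mul (hfin n)).aestronglyMeasurable) hfLp
    (fun n => hμ.mono fun x hx => ?_) (hμ.mono fun x hx => ?_)
  · have h₀ : 0 ≤ ∫ t in Ico 0 (n : ℝ), Real.exp (-x * t) ∂σ :=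
      setIntegral_nonneg measurableSet_Ico fun t _ => (Real.exp_pos _).le
    have h₁ : ∫ t in Ico 0 (n : ℝ), Real.exp (-x * t) ∂σ ≤ f x :=
      hf x hx ▸ setIntegral_le_integral (hint x hx)
        (Eventually.of_forall fun t => (Real.exp_pos _).le)
    rw [Real.norm_eq_abs, abs_of_nonneg (sub_nonneg.2 h₁)]
    linarith
  · rw [hf x hx]
    simpa using (tendsto_setIntegral_Ico_natCast hσ (hint x hx)).const_sub
      (∫ t, Real.exp (-x * t) ∂σ)

end Laplace

/-- The finite positive linear combinations of exponentials `x ↦ e^{-xt}`, `t ≥ 0`,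
are dense in the `L²(0,1)` norm in the cone of completely monotone functions with
finite `L²(0,1)` norm. -/
theorem stmt17 (f : ℝ → ℝ) (σ : Measure ℝ) (hσ0 : σ (Set.Iio 0) = 0)
    (hint : ∀ x : ℝ, 0 < x → Integrable (fun t => Real.exp (-x * t)) σ)
    (hf : ∀ x : ℝ, 0 < x → f x = ∫ t, Real.exp (-x * t) ∂σ)
    (hfL2 : MemLp f 2 (volume.restrict (Set.Ioo 0 1)))
    (δ : ℝ) (hδ : 0 < δ) :
    ∃ (n : ℕ) (c t : Fin n → ℝ), (∀ i, 0 ≤ c i) ∧ (∀ i, 0 ≤ t i) ∧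
      eLpNorm (fun x => f x - ∑ i, c i * Real.exp (-x * t i)) 2
          (volume.restrict (Set.Ioo 0 1)) ≤ ENNReal.ofReal δ := by
  set μ := volume.restrict (Ioo (0 : ℝ) 1)
  have hμ : ∀ᵐ x ∂μ, x ∈ Ioo (0 : ℝ) 1 := ae_restrict_mem measurableSet_Ioo
  have hσ : ∀ᵐ t ∂σ, 0 ≤ t := by simp only [ae_iff, not_le]; exact hσ0
  obtain ⟨N, hN⟩ := ((tendsto_eLpNorm_sub_setIntegral_Ico_exp_neg_mul (hμ.mono fun x hx => hx.1)
    two_ne_zero ENNReal.ofNat_ne_top hσ hint hf hfL2).eventually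
    (ge_mem_nhds (ENNReal.ofReal_pos.2 (half_pos hδ)))).exists
  have hfin : σ (Ico 0 (N : ℝ)) < ∞ :=
    measure_lt_top_of_bddAbove_of_integrable_exp_neg (by simpa using hint 1 one_pos) bddAbove_Ico
  obtain ⟨n, c, t, hc, ht, happrox⟩ :=
    exists_sum_exp_neg_mul_near_setIntegral_Ico N.cast_nonneg hfin (half_pos hδ)
  refine ⟨n, c, t, hc, ht, ?_⟩
  set F := fun x => ∫ s in Ico 0 (N : ℝ), Real.exp (-x * s) ∂σ
  set S := fun x => ∑ i, c i * Real.exp (-x * t i)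
  have hF : AEStronglyMeasurable F μ :=
    (stronglyMeasurable_setIntegral_exp_neg_mul hfin).aestronglyMeasurable
  have hS : AEStronglyMeasurable S μ := (by fun_prop : Continuous S).aestronglyMeasurable
  have hFS : eLpNorm (F - S) 2 μ ≤ ENNReal.ofReal (δ / 2) := by
    refine (eLpNorm_le_of_ae_bound
      (hμ.mono fun x hx => happrox x (Ioo_subset_Icc_self hx))).trans ?_
    simp [μ]
  calc eLpNorm (f - S) 2 μ = eLpNorm ((f - F) + (F - S)) 2 μ := by rw [sub_add_sub_cancel]
    _ ≤ eLpNorm (f - F) 2 μ + eLpNorm (F - S) 2 μ :=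
      eLpNorm_add_le (hfL2.1.sub hF) (hF.sub hS) one_le_two
    _ ≤ ENNReal.ofReal (δ / 2) + ENNReal.ofReal (δ / 2) := add_le_add hN hFS
    _ = ENNReal.ofReal δ := by
      rw [← ENNReal.ofReal_add (half_pos hδ).le (half_pos hδ).le, add_halves]
end
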